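/- In every generalized sun graph, the number of degree-2 vertices strictly exceeds the number of central vertices. -/

import Mathlib

/-!
Write `n = 4k + 2`. Every neighbour `u` of a central vertex `v` sits at cyclic offset
`u - v ≡ 1 (mod 4)`, because the successor of `v` does. A central vertex has a chord (otherwise
its degree is 2), and since `n ≡ 2 (mod 4)` every chord at a central vertex has length
`≡ 1 (mod 4)`. No chord `(a, b)` joins two central vertices: the apex `x` of the triangle on it
would give `b - a = (x - a) + (b - x) ≡ 2 (mod 4)`. So the central vertices inject into a
non-crossing family of chords of lengths `≡ 1 (mod 4)`, and such a family has at most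
`(n - 2) / 4 = k` members. As degree-2 and central vertices together number `2k + 1`, at least
`k + 1` vertices have degree 2.
-/

open SimpleGraph

/-- A diagonal (chord) of a convex `n`-gon with vertices `0, …, n-1` in cyclic order,
recorded as a pair `(i, j)` with `i < j`, joining two non-adjacent vertices. -/
def IsDiag (n : ℕ) (p : ℕ × ℕ) : Prop :=
  p.1 < p.2 ∧ p.2 < n ∧ 2 ≤ p.2 - p.1 ∧ p.2 - p.1 ≤ n - 2

/-- Two diagonals of a convex polygon cross (in their interiors). -/
def Crosses (p q : ℕ × ℕ) : Prop :=
  (p.1 < q.1 ∧ q.1 < p.2 ∧ p.2 < q.2) ∨ (q.1 < p.1 ∧ p.1 < q.2 ∧ q.2 < p.2)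

/-- A triangulation of a convex `n`-gon: `n - 3` pairwise non-crossing diagonals.
This is the standard combinatorial presentation of a maximal outerplanar graph on
`n` vertices (the polygon boundary is the outer Hamiltonian cycle). -/
structure PolyTriangulation (n : ℕ) where
  diags : Finset (ℕ × ℕ)
  isDiag : ∀ p ∈ diags, IsDiag n p
  noncross : ∀ p ∈ diags, ∀ q ∈ diags, ¬ Crosses p q
  card_eq : diags.card = n - 3

/-- The maximal outerplanar graph on `Fin n` given by a polygon triangulation:
the boundary Hamiltonian cycle `v_i v_{i+1}` together with the diagonals. -/
def PolyTriangulation.graph {n : ℕ} (T : PolyTriangulation n) : SimpleGraph (Fin n) :=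
  SimpleGraph.fromRel (fun i j =>
    (i.val + 1) % n = j.val ∨ (min i.val j.val, max i.val j.val) ∈ T.diags)

/-- `S` is a total dominating set of `G`: every vertex has a neighbor in `S`. -/
def IsTotalDom {V : Type*} (G : SimpleGraph V) (S : Set V) : Prop :=
  ∀ v, ∃ u ∈ S, G.Adj v u

/-- `G` has two disjoint total dominating sets (total domatic number at least 2). -/
def HasTwoTDS {V : Type*} (G : SimpleGraph V) : Prop :=
  ∃ S₁ S₂ : Set V, Disjoint S₁ S₂ ∧ IsTotalDom G S₁ ∧ IsTotalDom G S₂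

/-- The degree of a vertex in the maximal outerplanar graph of a triangulation. -/
noncomputable def pdeg {n : ℕ} (T : PolyTriangulation n) (v : Fin n) : ℕ :=
  (T.graph.neighborSet v).ncard

/-- A central vertex: no degree-2 vertex in its closed neighborhood, and indexing the
vertices cyclically starting from `v`, all neighbors of `v` have pairwise congruent
indices mod 4. -/
def IsCentral {n : ℕ} (T : PolyTriangulation n) (v : Fin n) : Prop :=
  (∀ u, (u = v ∨ T.graph.Adj v u) → pdeg T u ≠ 2) ∧
  (∀ u w, T.graph.Adj v u → T.graph.Adj v w →
    ((u.val + n - v.val) % n) % 4 = ((w.val + n - v.val) % n) % 4)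

/-- A generalized sun graph: a maximal outerplanar graph of order `n ≡ 2 (mod 4)`
in which the number of degree-2 vertices plus central vertices equals `n / 2`. -/
def IsGenSun {n : ℕ} (T : PolyTriangulation n) : Prop :=
  n % 4 = 2 ∧
  ({v : Fin n | pdeg T v = 2}.ncard + {v : Fin n | IsCentral T v}.ncard = n / 2)

theorem Nat.add_one_mod_eq_ite {x n : ℕ} (hx : x < n) :
    (x + 1) % n = if x + 1 < n then x + 1 else 0 := by
  split_ifs with h
  · exact Nat.mod_eq_of_lt h
  · rw [show x + 1 = n by omega, Nat.mod_self]

theorem Nat.add_sub_mod_of_le {a b n : ℕ} (hab : a ≤ b) (hb : b < n) :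
    (b + n - a) % n = b - a := by
  rw [show b + n - a = b - a + n by omega, Nat.add_mod_right, Nat.mod_eq_of_lt (by omega)]

theorem Nat.add_sub_mod_of_lt {a b n : ℕ} (hba : b < a) (ha : a < n) :
    (b + n - a) % n = b + n - a :=
  Nat.mod_eq_of_lt (by omega)

theorem Crosses.symm {p q : ℕ × ℕ} (h : Crosses p q) : Crosses q p :=
  Or.symm h

structure IsNoncrossingChords (m a b : ℕ) (F : Finset (ℕ × ℕ)) : Prop where
  bounds : ∀ p ∈ F, a ≤ p.1 ∧ p.1 + 2 ≤ p.2 ∧ p.2 ≤ b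
  dvd : ∀ p ∈ F, m ∣ p.2 - p.1 - 1
  noncross : ∀ p ∈ F, ∀ q ∈ F, ¬ Crosses p q

namespace IsNoncrossingChords

variable {m a b : ℕ} {F : Finset (ℕ × ℕ)}

theorem mono (hF : IsNoncrossingChords m a b F) {G : Finset (ℕ × ℕ)} {a' b' : ℕ}
    (hGF : G ⊆ F) (hG : ∀ p ∈ G, a' ≤ p.1 ∧ p.2 ≤ b') :
    IsNoncrossingChords m a' b' G where
  bounds p hp := ⟨(hG p hp).1, (hF.bounds p (hGF hp)).2.1, (hG p hp).2⟩
  dvd p hp := hF.dvd p (hGF hp)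
  noncross p hp q hq := hF.noncross p (hGF hp) q (hGF hq)

theorem exists_split (hF : IsNoncrossingChords m a b F) (hne : F.Nonempty) (hab : (a, b) ∉ F) :
    ∃ c, a < c ∧ c < b ∧ ∀ p ∈ F, p.2 ≤ c ∨ c ≤ p.1 := by
  classical
  obtain ⟨p₀, hp₀⟩ := hne
  have hp₀b := hF.bounds p₀ hp₀
  -- `c` is the far end of the longest chord from `a`, or `a + 1` if there is none.
  let ends := insert (a + 1) ((F.filter (·.1 = a)).image Prod.snd)
  have hends : (a + 1) ∈ ends := Finset.mem_insert_self _ _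
  obtain ⟨c, hc_mem, hc_max⟩ := ends.exists_max_image id ⟨_, hends⟩
  have hc_le : ∀ p ∈ F, p.1 = a → p.2 ≤ c := fun p hp hpa =>
    hc_max _ (Finset.mem_insert_of_mem (Finset.mem_image_of_mem _ (by simp [hp, hpa])))
  have hac : a + 1 ≤ c := hc_max _ hends
  have hc : c = a + 1 ∨ (a, c) ∈ F := by
    obtain h | h := Finset.mem_insert.1 hc_mem
    · exact Or.inl h
    · obtain ⟨q, hq, rfl⟩ := Finset.mem_image.1 h
      obtain ⟨hq, rfl⟩ := Finset.mem_filter.1 hq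
      exact Or.inr (by simpa using hq)
  refine ⟨c, by omega, ?_, fun p hp => ?_⟩
  · rcases hc with hc | hc
    · omega
    · have := (hF.bounds _ hc).2.2
      exact lt_of_le_of_ne this fun h => hab (h ▸ hc)
  · have hpb := hF.bounds p hp
    by_contra! hpc
    rcases Nat.lt_or_ge a p.1 with hap | hap
    · rcases hc with hc | hc
      · omega
      · exact hF.noncross _ hc p hp (Or.inl ⟨hap, hpc.2, hpc.1⟩)
    · have := hc_le p hp (by omega)
      omega

theorem mul_card_le_sub_two_of_forall_lt (hF : IsNoncrossingChords m a b F) (hab : (a, b) ∉ F)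
    (ih : ∀ a' b', b' - a' < b - a → ∀ G, IsNoncrossingChords m a' b' G →
      m * G.card ≤ b' - a' - 1) :
    m * F.card ≤ b - a - 2 := by
  classical
  rcases F.eq_empty_or_nonempty with rfl | hne
  · simp
  obtain ⟨c, hac, hcb, hsplit⟩ := hF.exists_split hne hab
  have hleft := ih a c (by omega) _ (hF.mono (F.filter_subset (·.2 ≤ c))
    fun p hp => ⟨(hF.bounds p (Finset.mem_filter.1 hp).1).1, (Finset.mem_filter.1 hp).2⟩)
  have hright := ih c b (by omega) _ (hF.mono (F.filter_subset (¬ ·.2 ≤ c))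
    fun p hp => ⟨(hsplit p (Finset.mem_filter.1 hp).1).resolve_left (Finset.mem_filter.1 hp).2,
      (hF.bounds p (Finset.mem_filter.1 hp).1).2.2⟩)
  rw [← Finset.card_filter_add_card_filter_not (·.2 ≤ c), mul_add]
  omega

theorem mul_card_le_sub_one (hF : IsNoncrossingChords m a b F) : m * F.card ≤ b - a - 1 := by
  induction h : b - a using Nat.strong_induction_on generalizing a b F with
  | _ N ih =>
  subst h
  have ih' : ∀ a' b', b' - a' < b - a → ∀ G, IsNoncrossingChords m a' b' G →
      m * G.card ≤ b' - a' - 1 := fun a' b' hlt G hG => ih _ hlt hG rfl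
  by_cases hab : (a, b) ∈ F
  · have herase := (hF.mono (F.erase_subset (a, b)) fun p hp => by
        have := hF.bounds p (Finset.mem_of_mem_erase hp); omega).mul_card_le_sub_two_of_forall_lt
      (Finset.notMem_erase _ _) ih'
    rw [Finset.card_erase_of_mem hab] at herase
    have hlen := hF.bounds _ hab
    obtain ⟨t, ht⟩ := hF.dvd _ hab
    have hpos : 0 < F.card := Finset.card_pos.2 ⟨_, hab⟩
    have : F.card - 1 < t := Nat.lt_of_mul_lt_mul_left (a := m) (by simp only at ht; omega)
    calc m * F.card ≤ m * t := Nat.mul_le_mul_left _ (by omega)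
      _ = b - a - 1 := ht.symm
  · exact (hF.mul_card_le_sub_two_of_forall_lt hab ih').trans (by omega)

theorem mul_card_le_sub_two (hF : IsNoncrossingChords m a b F) (hab : (a, b) ∉ F) :
    m * F.card ≤ b - a - 2 :=
  hF.mul_card_le_sub_two_of_forall_lt hab fun _ _ _ _ hG => hG.mul_card_le_sub_one

end IsNoncrossingChords

namespace PolyTriangulation

variable {n : ℕ} (T : PolyTriangulation n)

theorem isNoncrossingChords_one : IsNoncrossingChords 1 0 (n - 1) T.diags where
  bounds p hp := by have := T.isDiag p hp; simp only [IsDiag] at this; omega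
  dvd _ _ := one_dvd _
  noncross := T.noncross

theorem adj_iff {u v : Fin n} : T.graph.Adj u v ↔ u ≠ v ∧ ((u.val + 1) % n = v.val ∨
    (v.val + 1) % n = u.val ∨ (min u.val v.val, max u.val v.val) ∈ T.diags) := by
  rw [graph, SimpleGraph.fromRel_adj, min_comm v.val, max_comm v.val]
  tauto

theorem adj_iff_of_lt {u v : Fin n} (huv : u.val < v.val) : T.graph.Adj u v ↔
    v.val = u.val + 1 ∨ (u.val = 0 ∧ v.val + 1 = n) ∨ (u.val, v.val) ∈ T.diags := by
  rw [adj_iff, min_eq_left huv.le, max_eq_right huv.le, Nat.add_one_mod_eq_ite u.isLt,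
    Nat.add_one_mod_eq_ite v.isLt, ← Fin.val_ne_iff]
  by_cases hd : (u.val, v.val) ∈ T.diags
  · simp only [hd, or_true, and_true, iff_true]; omega
  · simp only [hd, or_false]; split_ifs <;> omega

theorem adj_of_mem_diags {p : ℕ × ℕ} (hp : p ∈ T.diags) {u v : Fin n} (hu : u.val = p.1)
    (hv : v.val = p.2) : T.graph.Adj u v := by
  have := T.isDiag p hp
  simp only [IsDiag] at this
  exact (T.adj_iff_of_lt (by omega)).2 (Or.inr (Or.inr (by rw [hu, hv]; exact hp)))

theorem mem_diags_of_forall_not_crosses {p : ℕ × ℕ} (hp : IsDiag n p)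
    (hcross : ∀ q ∈ T.diags, ¬ Crosses p q) : p ∈ T.diags := by
  classical
  by_contra hpT
  have hF : IsNoncrossingChords 1 0 (n - 1) (insert p T.diags) := by
    refine ⟨fun q hq => ?_, fun _ _ => one_dvd _, fun q hq r hr => ?_⟩
    · rcases Finset.mem_insert.1 hq with rfl | hq
      · simp only [IsDiag] at hp; omega
      · exact T.isNoncrossingChords_one.bounds q hq
    · rcases Finset.mem_insert.1 hq with hqp | hqT <;> rcases Finset.mem_insert.1 hr with hrp | hrT
      · simp [hqp, hrp, Crosses]
      · exact hqp ▸ hcross r hrT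
      · exact fun h => hcross q hqT (hrp ▸ h).symm
      · exact T.noncross q hqT r hrT
  have hlong : (0, n - 1) ∉ insert p T.diags := by
    intro h
    rcases Finset.mem_insert.1 h with rfl | h
    · simp only [IsDiag] at hp; omega
    · have := T.isDiag _ h; simp only [IsDiag] at this hp; omega
  have := hF.mul_card_le_sub_two hlong
  rw [Finset.card_insert_of_notMem hpT, T.card_eq] at this
  simp only [IsDiag] at hp
  omega

/-- `x` is the apex of the triangle on `(a, b)` towards the vertices `a..b`: the last
neighbour of `a` before `b` sees `b`, since otherwise the diagonal `(x, b)` would cross no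
diagonal of `T` and could be added to it. -/
theorem exists_adj_adj_of_mem_diags {a b : ℕ} (hab : (a, b) ∈ T.diags) {u v : Fin n}
    (hu : u.val = a) (hv : v.val = b) :
    ∃ x : Fin n, a < x.val ∧ x.val < b ∧ T.graph.Adj u x ∧ T.graph.Adj x v := by
  classical
  have hd := T.isDiag _ hab
  simp only [IsDiag] at hd
  have adj_u {x : Fin n} (hax : a < x.val) (hxb : x.val < b) :
      T.graph.Adj u x ↔ x.val = a + 1 ∨ (a, x.val) ∈ T.diags := by
    rw [adj_iff_of_lt T (by omega), hu]
    have : ¬(a = 0 ∧ x.val + 1 = n) := by omega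
    tauto
  have adj_v {x : Fin n} (hax : a < x.val) (hxb : x.val < b) :
      T.graph.Adj x v ↔ b = x.val + 1 ∨ (x.val, b) ∈ T.diags := by
    rw [adj_iff_of_lt T (by omega), hv]
    have : ¬(x.val = 0 ∧ b + 1 = n) := by omega
    tauto
  let W := Finset.univ.filter fun x : Fin n => a < x.val ∧ x.val < b ∧ T.graph.Adj u x
  have hW : (⟨a + 1, by omega⟩ : Fin n) ∈ W := by
    simp only [W, Finset.mem_filter, Finset.mem_univ, true_and]
    exact ⟨by omega, by omega, (adj_u (by simp) (by simp; omega)).2 (Or.inl rfl)⟩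
  obtain ⟨x, hxW, hx_max⟩ := W.exists_max_image Fin.val ⟨_, hW⟩
  simp only [W, Finset.mem_filter, Finset.mem_univ, true_and] at hxW hx_max
  obtain ⟨hax, hxb, hux⟩ := hxW
  refine ⟨x, hax, hxb, hux, (adj_v hax hxb).2 ?_⟩
  by_contra! hxv
  refine hxv.2 (T.mem_diags_of_forall_not_crosses ⟨hxb, by simp only; omega, by omega, by omega⟩
    fun q hq hcross => ?_)
  have hqd := T.isDiag q hq
  simp only [IsDiag] at hqd
  rcases hcross with ⟨h1, h2, h3⟩ | ⟨h1, h2, h3⟩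
  · exact T.noncross _ hab q hq (Or.inl ⟨by omega, h2, h3⟩)
  · rcases lt_trichotomy q.1 a with hqa | hqa | hqa
    · exact T.noncross _ hab q hq (Or.inr ⟨hqa, by omega, h3⟩)
    · have hq' : (a, q.2) ∈ T.diags := by rw [← hqa]; exact hq
      have := hx_max ⟨q.2, by omega⟩ ⟨by simp only; omega, by simp only; omega,
        (adj_u (by simp only; omega) (by simp only; omega)).2 (Or.inr hq')⟩
      simp only at this
      omega
    · have hax' := (adj_u hax hxb).1 hux
      rcases hax' with hax' | hax'
      · omega
      · exact T.noncross _ hax' q hq (Or.inl ⟨hqa, h1, h2⟩)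

theorem pdeg_lt (v : Fin n) : pdeg T v < n := by
  have hne : T.graph.neighborSet v ≠ Set.univ := fun h =>
    T.graph.loopless.irrefl v (h ▸ Set.mem_univ v : v ∈ T.graph.neighborSet v)
  simpa [pdeg] using Set.ncard_lt_card hne

theorem pdeg_eq_two_of_forall_not_mem_diags (hn : 3 ≤ n) {v : Fin n}
    (hv : ∀ p ∈ T.diags, p.1 ≠ v.val ∧ p.2 ≠ v.val) : pdeg T v = 2 := by
  have hvn := v.isLt
  have hN : T.graph.neighborSet v =
      {⟨if v.val + 1 < n then v.val + 1 else 0, by split <;> omega⟩,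
        ⟨if 0 < v.val then v.val - 1 else n - 1, by split <;> omega⟩} := by
    ext u
    have hun := u.isLt
    have hdiag : (min v.val u.val, max v.val u.val) ∉ T.diags := fun h => by
      have := hv _ h; simp only at this; omega
    simp only [SimpleGraph.mem_neighborSet, adj_iff, Set.mem_insert_iff, Set.mem_singleton_iff,
      Fin.ext_iff, ne_eq, hdiag, or_false]
    rw [Nat.add_one_mod_eq_ite hvn, Nat.add_one_mod_eq_ite hun]
    split_ifs <;> omega
  rw [pdeg, hN, Set.ncard_pair]
  simp only [ne_eq, Fin.mk.injEq]
  split_ifs <;> omega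

end PolyTriangulation

namespace IsCentral

variable {n : ℕ} {T : PolyTriangulation n} {v : Fin n}

theorem add_sub_mod_mod_four (hn : 2 ≤ n) (hv : IsCentral T v) {u : Fin n}
    (hu : T.graph.Adj v u) : (u.val + n - v.val) % n % 4 = 1 := by
  have hvn := v.isLt
  let w : Fin n := ⟨if v.val + 1 < n then v.val + 1 else 0, by split <;> omega⟩
  have hw : T.graph.Adj v w := by
    rw [T.adj_iff, Nat.add_one_mod_eq_ite hvn]
    refine ⟨fun h => ?_, Or.inl rfl⟩
    have := congrArg Fin.val h
    simp only [w] at this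
    split_ifs at this <;> omega
  rw [hv.2 u w hu hw]
  simp only [w]
  split_ifs with h
  · rw [Nat.add_sub_mod_of_le (by omega) h]; omega
  · rw [Nat.add_sub_mod_of_lt (by omega) hvn]; omega

theorem exists_mem_diags (hn : 3 ≤ n) (hv : IsCentral T v) :
    ∃ p ∈ T.diags, p.1 = v.val ∨ p.2 = v.val := by
  by_contra! h
  exact hv.1 v (Or.inl rfl) (T.pdeg_eq_two_of_forall_not_mem_diags hn h)

theorem sub_mod_four_of_mem_diags (hn4 : n % 4 = 2) (hv : IsCentral T v) {p : ℕ × ℕ}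
    (hp : p ∈ T.diags) (hvp : p.1 = v.val ∨ p.2 = v.val) : (p.2 - p.1) % 4 = 1 := by
  have hd := T.isDiag p hp
  simp only [IsDiag] at hd
  rcases hvp with h | h
  · have := hv.add_sub_mod_mod_four (by omega) (T.adj_of_mem_diags hp h.symm rfl :
      T.graph.Adj v ⟨p.2, hd.2.1⟩)
    rwa [← h, Nat.add_sub_mod_of_le hd.1.le hd.2.1] at this
  · have := hv.add_sub_mod_mod_four (by omega) (T.adj_of_mem_diags hp rfl h.symm :
      T.graph.Adj ⟨p.1, by omega⟩ v).symm
    rw [← h, Nat.add_sub_mod_of_lt hd.1 hd.2.1] at this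
    omega

theorem not_isCentral_of_mem_diags (hn4 : n % 4 = 2) (hv : IsCentral T v) {p : ℕ × ℕ}
    (hp : p ∈ T.diags) (hvp : v.val = p.1) {w : Fin n} (hwp : w.val = p.2) :
    ¬ IsCentral T w := by
  intro hw
  have hd := T.isDiag p hp
  simp only [IsDiag] at hd
  obtain ⟨x, hvx, hxw, hv_adj, hw_adj⟩ := T.exists_adj_adj_of_mem_diags hp hvp hwp
  have h1 := hv.add_sub_mod_mod_four (by omega) hv_adj
  have h2 := hw.add_sub_mod_mod_four (by omega) hw_adj.symm
  rw [hvp, Nat.add_sub_mod_of_le hvx.le x.isLt] at h1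
  rw [hwp, Nat.add_sub_mod_of_lt hxw hd.2.1] at h2
  have := hv.sub_mod_four_of_mem_diags hn4 hp (Or.inl hvp.symm)
  omega

end IsCentral

theorem PolyTriangulation.four_mul_ncard_isCentral_le {n : ℕ} (T : PolyTriangulation n)
    (hn : 2 < n) (hn4 : n % 4 = 2) : 4 * {v : Fin n | IsCentral T v}.ncard ≤ n - 2 := by
  classical
  let F := T.diags.filter fun p => (p.2 - p.1) % 4 = 1
  have hF : IsNoncrossingChords 4 0 (n - 1) F := by
    have hT := T.isNoncrossingChords_one
    refine ⟨fun p hp => hT.bounds p (Finset.mem_filter.1 hp).1, fun p hp => ?_,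
      fun p hp q hq => hT.noncross p (Finset.mem_filter.1 hp).1 q (Finset.mem_filter.1 hq).1⟩
    have := hT.bounds p (Finset.mem_filter.1 hp).1
    have := (Finset.mem_filter.1 hp).2
    omega
  have hC : {v : Fin n | IsCentral T v}.ncard ≤ F.card := by
    rw [show {v : Fin n | IsCentral T v} = ↑(Finset.univ.filter (IsCentral T)) by ext; simp,
      Set.ncard_coe_finset]
    refine Finset.card_le_card_of_forall_subsingleton (fun v p => p.1 = v.val ∨ p.2 = v.val)
      (fun v hv => ?_) (fun p hp => ?_)
    · have hv := (Finset.mem_filter.1 hv).2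
      obtain ⟨p, hp, hvp⟩ := hv.exists_mem_diags hn
      exact ⟨p, Finset.mem_filter.2 ⟨hp, hv.sub_mod_four_of_mem_diags hn4 hp hvp⟩, hvp⟩
    · have hp := (Finset.mem_filter.1 hp).1
      rintro u ⟨hu, hup⟩ w ⟨hw, hwp⟩
      replace hu := (Finset.mem_filter.1 hu).2
      replace hw := (Finset.mem_filter.1 hw).2
      rcases hup with hup | hup <;> rcases hwp with hwp | hwp
      · exact Fin.ext (hup.symm.trans hwp)
      · exact absurd hw (hu.not_isCentral_of_mem_diags hn4 hp hup.symm hwp.symm)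
      · exact absurd hu (hw.not_isCentral_of_mem_diags hn4 hp hwp.symm hup.symm)
      · exact Fin.ext (hup.symm.trans hwp)
  have := hF.mul_card_le_sub_one
  omega

theorem IsGenSun.two_lt {n : ℕ} {T : PolyTriangulation n} (hs : IsGenSun T) : 2 < n := by
  obtain ⟨hn4, hsum⟩ := hs
  by_contra! hn
  obtain rfl : n = 2 := by omega
  have hdeg : {v : Fin 2 | pdeg T v = 2} = ∅ :=
    Set.eq_empty_of_forall_notMem fun v => (T.pdeg_lt v).ne
  have hcen : {v : Fin 2 | IsCentral T v} = Set.univ := Set.eq_univ_of_forall fun v =>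
    ⟨fun u _ => (T.pdeg_lt u).ne, fun u w hu hw => by
      obtain rfl : u = w := by have := hu.ne; have := hw.ne; omega
      rfl⟩
  rw [hdeg, hcen] at hsum
  simp at hsum

/-- in every generalized sun graph, the number of degree-2 vertices
strictly exceeds the number of central vertices. -/
theorem stmt14 (n : ℕ) (T : PolyTriangulation n) (hs : IsGenSun T) :
    {v : Fin n | IsCentral T v}.ncard < {v : Fin n | pdeg T v = 2}.ncard := by
  have hC := T.four_mul_ncard_isCentral_le hs.two_lt hs.1
  obtain ⟨hn4, hsum⟩ := hs
  omega
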